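/- arXiv:0709.0213 — 4 statements merged into one kernel-verified Lean document; each statement's English description precedes it below -/
import Mathlib

section
/- For the function f_a(x) = exp(-|x|^a / 2) on ℝ², with a > 0, the Dirichlet integral satisfies ∫_{ℝ²} |∇f_a(x)|² dx = (π/2)·a. In particular, ∫_{ℝ²} |∇f_a|² dx → 0 as a → 0+. -/
/-!
`f_a` is radial with profile `φ(r) = exp (-r ^ a / 2)`, so `|∇f_a(x)| = |φ'(|x|)|` away from the
origin. Polar coordinates turn the Dirichlet integral into
`2π ∫₀^∞ r φ'(r)² dr = 2π (a/2)² ∫₀^∞ r^(2a-1) e^(-r^a) dr = 2π (a/2)² Γ(2) / a = π a / 2`.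
-/

open MeasureTheory Filter Real

section RadialGradient

variable {F : Type*} [NormedAddCommGroup F] [InnerProductSpace ℝ F]

theorem hasFDerivAt_norm_of_ne_zero {x : F} (hx : x ≠ 0) :
    HasFDerivAt (‖·‖) (‖x‖⁻¹ • innerSL ℝ x) x := by
  have hsq := (hasStrictFDerivAt_norm_sq x).hasFDerivAt.sqrt (by positivity)
  simp only [sqrt_sq (norm_nonneg _)] at hsq
  convert hsq using 1
  ext v
  simp only [smul_apply, coe_innerSL_apply, smul_eq_mul, one_div, mul_inv_rev,
    nsmul_eq_mul, Nat.cast_ofNat]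
  field_simp

variable [CompleteSpace F]

theorem HasDerivAt.hasGradientAt_comp_norm {φ : ℝ → ℝ} {φ' : ℝ} {x : F} (hx : x ≠ 0)
    (hφ : HasDerivAt φ φ' ‖x‖) : HasGradientAt (fun y => φ ‖y‖) ((φ' / ‖x‖) • x) x := by
  rw [hasGradientAt_iff_hasFDerivAt]
  refine (hφ.comp_hasFDerivAt x (hasFDerivAt_norm_of_ne_zero hx)).congr_fderiv ?_
  ext v
  simp only [smul_apply, coe_innerSL_apply, smul_eq_mul, div_eq_inv_mul,
    map_smul, InnerProductSpace.toDual_apply_apply]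
  ring

theorem HasDerivAt.norm_gradient_comp_norm {φ : ℝ → ℝ} {φ' : ℝ} {x : F} (hx : x ≠ 0)
    (hφ : HasDerivAt φ φ' ‖x‖) : ‖gradient (fun y => φ ‖y‖) x‖ = |φ'| := by
  rw [(hφ.hasGradientAt_comp_norm hx).gradient, norm_smul, norm_div, norm_norm, Real.norm_eq_abs,
    div_mul_cancel₀ _ (norm_ne_zero_iff.2 hx)]

end RadialGradient

theorem integral_comp_norm_euclideanSpace_fin_two {E : Type*} [NormedAddCommGroup E]
    [NormedSpace ℝ E] (f : ℝ → E) :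
    ∫ x : EuclideanSpace ℝ (Fin 2), f ‖x‖ = (2 * π) • ∫ r in Set.Ioi 0, r • f r := by
  rw [integral_fun_norm_addHaar, finrank_euclideanSpace_fin, measureReal_def,
    EuclideanSpace.volume_ball_fin_two]
  simp [pi_nonneg, ← smul_smul, ofNat_smul_eq_nsmul]

theorem hasDerivAt_exp_neg_rpow_div_two {a r : ℝ} (hr : 0 < r) :
    HasDerivAt (fun s => exp (-s ^ a / 2)) (-(a / 2 * r ^ (a - 1) * exp (-r ^ a / 2))) r := by
  convert ((hasDerivAt_rpow_const (p := a) (Or.inl hr.ne')).fun_neg.div_const 2).exp using 1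
  ring

theorem integral_Ioi_mul_sq_rpow_mul_exp_neg_rpow_div_two {a : ℝ} (ha : 0 < a) :
    ∫ r in Set.Ioi 0, r * (a / 2 * r ^ (a - 1) * exp (-r ^ a / 2)) ^ 2 = a / 4 := by
  have hpt : Set.EqOn (fun r : ℝ => r * (a / 2 * r ^ (a - 1) * exp (-r ^ a / 2)) ^ 2)
      (fun r => (a / 2) ^ 2 * (r ^ (2 * a - 1) * exp (-r ^ a))) (Set.Ioi 0) := by
    intro r (hr : 0 < r)
    have hpow : r * (r ^ (a - 1)) ^ 2 = r ^ (2 * a - 1) := by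
      rw [← rpow_natCast, ← rpow_mul hr.le,
        show 2 * a - 1 = 1 + (a - 1) * ((2 : ℕ) : ℝ) by push_cast; ring, rpow_add hr, rpow_one]
    have hexp : exp (-r ^ a / 2) ^ 2 = exp (-r ^ a) := by
      rw [← exp_nat_mul]; congr 1; push_cast; ring
    dsimp only
    rw [mul_pow, mul_pow, ← hexp, ← hpow]
    ring
  rw [setIntegral_congr_fun measurableSet_Ioi hpt, integral_const_mul,
    integral_rpow_mul_exp_neg_rpow ha (by linarith),
    show (2 * a - 1 + 1) / a = 2 by field_simp; ring, Gamma_two]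
  field_simp
  ring

theorem integral_norm_gradient_exp_neg_norm_rpow_sq {a : ℝ} (ha : 0 < a) :
    ∫ x : EuclideanSpace ℝ (Fin 2), ‖gradient (fun y => exp (-‖y‖ ^ a / 2)) x‖ ^ 2
      = π / 2 * a := by
  have hae : (fun x : EuclideanSpace ℝ (Fin 2) => ‖gradient (fun y => exp (-‖y‖ ^ a / 2)) x‖ ^ 2)
      =ᵐ[volume] fun x => (a / 2 * ‖x‖ ^ (a - 1) * exp (-‖x‖ ^ a / 2)) ^ 2 := by
    filter_upwards [Measure.ae_ne volume 0] with x hx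
    rw [(hasDerivAt_exp_neg_rpow_div_two (norm_pos_iff.2 hx)).norm_gradient_comp_norm hx,
      sq_abs, neg_sq]
  rw [integral_congr_ae hae, integral_comp_norm_euclideanSpace_fin_two
    (fun r => (a / 2 * r ^ (a - 1) * exp (-r ^ a / 2)) ^ 2)]
  simp only [smul_eq_mul]
  rw [integral_Ioi_mul_sq_rpow_mul_exp_neg_rpow_div_two ha]
  ring

/-- For `f_a(x) = exp(-|x|^a / 2)` on `ℝ²`, the Dirichlet integral is `(π/2)·a`,
and in particular it tends to `0` as `a → 0+`. -/
theorem dirichlet_integral_of_f_a :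
    (∀ a : ℝ, 0 < a →
      ∫ x : EuclideanSpace ℝ (Fin 2),
        ‖gradient (fun y : EuclideanSpace ℝ (Fin 2) => Real.exp (-‖y‖ ^ a / 2)) x‖ ^ 2
      = (π / 2) * a) ∧
    Tendsto (fun a : ℝ =>
      ∫ x : EuclideanSpace ℝ (Fin 2),
        ‖gradient (fun y : EuclideanSpace ℝ (Fin 2) => Real.exp (-‖y‖ ^ a / 2)) x‖ ^ 2)
      (nhdsWithin 0 (Set.Ioi 0)) (nhds 0) := by
  refine ⟨fun a ha => integral_norm_gradient_exp_neg_norm_rpow_sq ha, ?_⟩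
  have hlin : Tendsto (fun a : ℝ => π / 2 * a) (nhdsWithin 0 (Set.Ioi 0)) (nhds 0) := by
    simpa using ((continuous_const_mul (π / 2)).tendsto 0).mono_left nhdsWithin_le_nhds
  exact hlin.congr' (eventually_nhdsWithin_of_forall
    fun a ha => (integral_norm_gradient_exp_neg_norm_rpow_sq ha).symm)
end

section
/- Let γ : [0,1] → ℝ² be a regular C¹ curve (γ' continuous and nonvanishing) whose image is not contained in any straight line. Then the difference set X = {γ(t) - γ(s) : s, t ∈ [0,1]} has nonempty interior in ℝ². -/
open Set Topology Filter Submodule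

/-!
If two interior velocities `γ'(s)`, `γ'(t)` span the plane, then `(s, t) ↦ γ t - γ s` has
surjective strict derivative at `(s, t)`, so by the inverse function theorem it maps a
neighbourhood of `(s, t)` onto a neighbourhood of `γ t - γ s`. Otherwise every interior velocity
is parallel to the nonzero vector `γ'(1/2)`; a linear functional vanishing on that direction then
has constant composition with `γ` by the mean value theorem, which puts the arc on a line.
-/

theorem mem_span_singleton_of_span_pair_ne_top {K V : Type*} [DivisionRing K] [AddCommGroup V]
    [Module K V] (hV : Module.finrank K V = 2) {w v : V} (hw : w ≠ 0)
    (hspan : span K {w, v} ≠ ⊤) : v ∈ K ∙ w := by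
  by_contra hv
  have hli : LinearIndependent K ![w, v] :=
    (LinearIndependent.pair_iff' hw).2 fun a ha => hv (mem_span_singleton.2 ⟨a, ha⟩)
  refine hspan ?_
  rw [← Matrix.range_cons_cons_empty w v ![]]
  exact hli.span_eq_top_of_card_eq_finrank (by simp [hV])

theorem sub_mem_of_hasDerivAt_mem {E : Type*} [NormedAddCommGroup E] [NormedSpace ℝ E]
    [FiniteDimensional ℝ E] {K : Submodule ℝ E} {f f' : ℝ → E} {a b : ℝ}
    (hf : ContinuousOn f (Icc a b)) (hderiv : ∀ x ∈ Ioo a b, HasDerivAt f (f' x) x)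
    (hK : ∀ x ∈ Ioo a b, f' x ∈ K) : ∀ x ∈ Icc a b, f x - f a ∈ K := by
  intro x hx
  rcases hx.1.eq_or_lt with rfl | hax
  · simp
  by_contra hnot
  obtain ⟨φ, hφ, hKφ⟩ := K.exists_le_ker_of_notMem hnot
  let φc := LinearMap.toContinuousLinearMap φ
  obtain ⟨c, hc, hslope⟩ := exists_hasDerivAt_eq_slope (φc ∘ f) (φc ∘ f') hax
    (φc.continuous.comp_continuousOn (hf.mono (Icc_subset_Icc_right hx.2)))
    fun y hy => φc.hasFDerivAt.comp_hasDerivAt y (hderiv y ⟨hy.1, hy.2.trans_le hx.2⟩)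
  have hφc : φ (f' c) = 0 := hKφ (hK c ⟨hc.1, hc.2.trans_le hx.2⟩)
  simp only [Function.comp_apply, φc, LinearMap.coe_toContinuousLinearMap', hφc] at hslope
  refine hφ ?_
  rw [map_sub]
  exact (div_eq_zero_iff.1 hslope.symm).resolve_right (sub_ne_zero.2 hax.ne')

theorem HasStrictDerivAt.map_nhds_sub_eq {E : Type*} [NormedAddCommGroup E] [NormedSpace ℝ E]
    [CompleteSpace E] {f : ℝ → E} {u v : E} {s t : ℝ} (hs : HasStrictDerivAt f u s)
    (ht : HasStrictDerivAt f v t) (hspan : span ℝ {u, v} = ⊤) :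
    map (fun p : ℝ × ℝ => f p.2 - f p.1) (𝓝 (s, t)) = 𝓝 (f t - f s) := by
  let L : ℝ × ℝ →L[ℝ] E :=
    ((1 : ℝ →L[ℝ] ℝ).smulRight v).comp (.snd ℝ ℝ ℝ) - ((1 : ℝ →L[ℝ] ℝ).smulRight u).comp (.fst ℝ ℝ ℝ)
  have hL : HasStrictFDerivAt (fun p : ℝ × ℝ => f p.2 - f p.1) L (s, t) :=
    (ht.hasStrictFDerivAt.comp (s, t) hasStrictFDerivAt_snd).sub
      (hs.hasStrictFDerivAt.comp (s, t) hasStrictFDerivAt_fst)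
  refine hL.map_nhds_eq_of_surj (LinearMap.range_eq_top.2 fun y => ?_)
  obtain ⟨a, b, hab⟩ := mem_span_pair.1 (hspan ▸ mem_top : y ∈ span ℝ {u, v})
  exact ⟨(-a, b), by simp [L, ← hab]; abel⟩

/-- The difference set of a regular `C¹` arc in the plane which is not contained
in a straight line has nonempty interior. -/
theorem difference_set_of_arc_has_interior_point
    (γ : ℝ → EuclideanSpace ℝ (Fin 2))
    (hγ : ContDiffOn ℝ 1 γ (Icc 0 1))
    (hreg : ∀ t ∈ Icc (0:ℝ) 1, derivWithin γ (Icc 0 1) t ≠ 0)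
    (hline : ¬ ∃ (v w : EuclideanSpace ℝ (Fin 2)),
      ∀ t ∈ Icc (0:ℝ) 1, ∃ c : ℝ, γ t = v + c • w) :
    (interior {x : EuclideanSpace ℝ (Fin 2) |
      ∃ s ∈ Icc (0:ℝ) 1, ∃ t ∈ Icc (0:ℝ) 1, x = γ t - γ s}).Nonempty := by
  set γ' := derivWithin γ (Icc 0 1)
  have hderiv (t : ℝ) (ht : t ∈ Ioo (0:ℝ) 1) : HasStrictDerivAt γ (γ' t) t := by
    have hnhds := Icc_mem_nhds ht.1 ht.2
    simpa [γ', derivWithin_of_mem_nhds hnhds] using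
      (hγ.contDiffAt hnhds).hasStrictDerivAt one_ne_zero
  by_cases hspan : ∃ s ∈ Ioo (0:ℝ) 1, ∃ t ∈ Ioo (0:ℝ) 1, span ℝ {γ' s, γ' t} = ⊤
  · obtain ⟨s, hs, t, ht, htop⟩ := hspan
    refine ⟨γ t - γ s, mem_interior_iff_mem_nhds.2 ?_⟩
    rw [← (hderiv s hs).map_nhds_sub_eq (hderiv t ht) htop, mem_map]
    filter_upwards [prod_mem_nhds (Icc_mem_nhds hs.1 hs.2) (Icc_mem_nhds ht.1 ht.2)] with p hp
    exact ⟨p.1, hp.1, p.2, hp.2, rfl⟩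
  · push Not at hspan
    have hhalf : (1 / 2 : ℝ) ∈ Ioo 0 1 := by norm_num
    have hK (t : ℝ) (ht : t ∈ Ioo (0:ℝ) 1) : γ' t ∈ ℝ ∙ γ' (1 / 2) :=
      mem_span_singleton_of_span_pair_ne_top finrank_euclideanSpace_fin
        (hreg _ (Ioo_subset_Icc_self hhalf)) (hspan _ hhalf t ht)
    refine absurd ⟨γ 0, γ' (1 / 2), fun t ht => ?_⟩ hline
    obtain ⟨c, hc⟩ := mem_span_singleton.1 <| sub_mem_of_hasDerivAt_mem hγ.continuousOn
      (fun x hx => (hderiv x hx).hasDerivAt) hK t ht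
    exact ⟨c, by rw [hc, add_sub_cancel]⟩
end

section
/- Let ν be a negative finite Borel measure on ℝ² whose support has positive Lebesgue measure, and let p₁,…,p_N ∈ ℝ² be pairwise distinct. Then the matrix (ν̂(p_j - p_k))_{j,k=1}^N is negative definite: Σ_{j,k} ξ̄_j ξ_k ν̂(p_j - p_k) < 0 for all nonzero ξ ∈ ℂ^N. -/
/-!
Writing `f(x) = ∑ⱼ ξⱼ e^{i⟨pⱼ,x⟩}`, the quadratic form equals `-(1/2π) ∫ |f|² dμ` with `μ = -ν`.
This is `≤ 0`, and if it vanished then `f = 0` on the support of `μ`, since `f` is continuous.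
But the zero set of `f` is Lebesgue-null: along the lines in a direction `v` for which the
frequencies `⟨pⱼ,v⟩` are distinct, `f` restricts to a one-variable exponential sum which is
real-analytic and, by Dedekind's independence of characters, not identically zero, so its zeros
are isolated; Fubini then makes the whole zero set null.
-/

open MeasureTheory Real Complex
open scoped RealInnerProductSpace ComplexConjugate

theorem AnalyticOnNhd.ae_ne_zero {𝕜 F : Type*} [NontriviallyNormedField 𝕜] [PreconnectedSpace 𝕜]
    [SecondCountableTopology 𝕜] [MeasurableSpace 𝕜] [NormedAddCommGroup F] [NormedSpace 𝕜 F]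
    {μ : Measure 𝕜} [NullSingletonClass μ] {f : 𝕜 → F}
    (hf : AnalyticOnNhd 𝕜 f Set.univ) (h : ∃ x, f x ≠ 0) : ∀ᵐ x ∂μ, f x ≠ 0 := by
  obtain ⟨x, hx⟩ := h
  have hcod := (hf.eqOn_zero_or_eventually_ne_zero_of_preconnected isPreconnected_univ).resolve_left
    fun h0 => hx (h0 (Set.mem_univ x))
  have := ae_restrict_le_codiscreteWithin (μ := μ) MeasurableSet.univ hcod
  rwa [Measure.restrict_univ] at this

/-- Fubini applied to `{(x, t) | x + t • v ∈ Z}`: its `μ ⊗ volume`-measure is `0` by the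
hypothesis, and `μ Z * ∞` by translation invariance. -/
theorem measure_eq_zero_of_forall_line_null {E : Type*} [NormedAddCommGroup E] [NormedSpace ℝ E]
    [MeasurableSpace E] [BorelSpace E] [SecondCountableTopology E]
    (μ : Measure E) [μ.IsAddRightInvariant] [SFinite μ] {Z : Set E} (hZ : MeasurableSet Z) (v : E)
    (h : ∀ x, volume {t : ℝ | x + t • v ∈ Z} = 0) : μ Z = 0 := by
  set S : Set (E × ℝ) := {q | q.1 + q.2 • v ∈ Z}
  have hS : MeasurableSet S := hZ.preimage (measurable_fst.add (measurable_snd.smul_const v))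
  have hnull : μ.prod volume S = 0 := by
    rw [Measure.prod_apply hS]
    exact (lintegral_congr h).trans lintegral_zero
  have hall : μ.prod volume S = μ Z * ⊤ := by
    rw [Measure.prod_apply_symm hS]
    have (t : ℝ) : μ ((fun x => (x, t)) ⁻¹' S) = μ Z := measure_preimage_add_right μ (t • v) Z
    simp [this]
  simpa [hall] using hnull

section TrigPoly

variable {ι E : Type*} [Fintype ι] [NormedAddCommGroup E] [InnerProductSpace ℝ E]

noncomputable def trigPoly (ξ : ι → ℂ) (p : ι → E) (x : E) : ℂ :=
  ∑ j, ξ j * exp (I * ⟪p j, x⟫)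

noncomputable def expInnerChar (p : E) : Multiplicative E →* ℂ where
  toFun x := exp (I * ⟪p, x.toAdd⟫)
  map_one' := by simp
  map_mul' x y := by simp [inner_add_right, mul_add, Complex.exp_add]

theorem expInnerChar_injective : Function.Injective (expInnerChar (E := E)) := by
  intro p q hpq
  by_contra hne
  -- at `x` the two characters differ by the factor `e^{iπ} = -1`
  set x : E := (π / ‖p - q‖ ^ 2) • (p - q)
  have hx : ⟪p, x⟫ - ⟪q, x⟫ = π := by
    have : ‖p - q‖ ≠ 0 := norm_ne_zero_iff.mpr (sub_ne_zero.mpr hne)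
    rw [← inner_sub_left, real_inner_smul_right, real_inner_self_eq_norm_sq]
    field_simp
  have hpqx : exp (I * ⟪p, x⟫) = exp (I * ⟪q, x⟫) :=
    congrArg (fun χ : Multiplicative E →* ℂ => χ (.ofAdd x)) hpq
  have : exp (π * I) = 1 := calc
    exp (π * I) = exp (I * ⟪p, x⟫ - I * ⟪q, x⟫) := by rw [← hx]; push_cast; ring_nf
    _ = 1 := by rw [Complex.exp_sub, hpqx, div_self (Complex.exp_ne_zero _)]
  norm_num [exp_pi_mul_I] at this

theorem exists_trigPoly_ne_zero {ξ : ι → ℂ} {p : ι → E} (hp : Function.Injective p)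
    (hξ : ξ ≠ 0) : ∃ x, trigPoly ξ p x ≠ 0 := by
  by_contra! h
  have hli := (linearIndependent_monoidHom (Multiplicative E) ℂ).comp _
    (expInnerChar_injective.comp hp)
  refine hξ (funext (Fintype.linearIndependent_iff.mp hli ξ (funext fun x => ?_)))
  simpa [trigPoly, expInnerChar] using h x.toAdd

theorem continuous_trigPoly (ξ : ι → ℂ) (p : ι → E) : Continuous (trigPoly ξ p) := by
  unfold trigPoly
  fun_prop

theorem analyticOnNhd_trigPoly (ξ : ι → ℂ) (p : ι → E) :
    AnalyticOnNhd ℝ (trigPoly ξ p) Set.univ := by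
  intro x _
  have hexp (j : ι) : AnalyticAt ℝ (fun x => exp (I * ⟪p j, x⟫)) x :=
    analyticAt_cexp.restrictScalars.comp
      (analyticAt_const.mul ((ofRealCLM.comp (innerSL ℝ (p j))).analyticAt x))
  exact Finset.analyticAt_fun_sum _ fun j _ => analyticAt_const.mul (hexp j)

theorem norm_trigPoly_le (ξ : ι → ℂ) (p : ι → E) (x : E) : ‖trigPoly ξ p x‖ ≤ ∑ j, ‖ξ j‖ := by
  refine (norm_sum_le _ _).trans (Finset.sum_le_sum fun j _ => ?_)
  simp [Complex.norm_exp]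

theorem trigPoly_add_smul (ξ : ι → ℂ) (p : ι → E) (x v : E) (t : ℝ) :
    trigPoly ξ p (x + t • v) =
      trigPoly (fun j => ξ j * exp (I * ⟪p j, x⟫)) (fun j => ⟪p j, v⟫) t := by
  simp only [trigPoly, inner_add_right, real_inner_smul_right, mul_assoc, ← Complex.exp_add]
  congr! 3
  simp only [ofReal_add, ofReal_mul, RCLike.inner_apply, ringHom_apply]
  ring

theorem conj_trigPoly_mul_self (ξ : ι → ℂ) (p : ι → E) (x : E) :
    conj (trigPoly ξ p x) * trigPoly ξ p x =
      ∑ j, ∑ k, conj (ξ j) * ξ k * exp (-(I * ⟪p j - p k, x⟫)) := by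
  simp only [trigPoly, map_sum, Finset.sum_mul_sum, map_mul, ← Complex.exp_conj, conj_I,
    conj_ofReal, inner_sub_left, ofReal_sub]
  refine Finset.sum_congr rfl fun j _ => Finset.sum_congr rfl fun k _ => ?_
  rw [mul_mul_mul_comm, ← Complex.exp_add]
  ring_nf

theorem exists_injective_inner {p : ι → E} (hp : Function.Injective p) :
    ∃ v : E, Function.Injective fun j => ⟪p j, v⟫ := by
  by_contra! h
  obtain ⟨⟨⟨j, k⟩, hjk⟩, htop⟩ := Subspace.exists_eq_top_of_iUnion_eq_univ
    (p := fun jk : {jk : ι × ι // jk.1 ≠ jk.2} => LinearMap.ker (innerₛₗ ℝ (p jk.1.1 - p jk.1.2)))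
    (Set.eq_univ_of_forall fun v => by
      obtain ⟨j, k, hjk, hne⟩ := Function.not_injective_iff.mp (h v)
      exact Set.mem_iUnion.mpr ⟨⟨(j, k), hne⟩, by simp [hjk]⟩)
  have : p j - p k ∈ LinearMap.ker (innerₛₗ ℝ (p j - p k)) := htop ▸ Submodule.mem_top
  rw [LinearMap.mem_ker, innerₛₗ_apply_apply, inner_self_eq_zero, sub_eq_zero] at this
  exact hjk (hp this)

variable [MeasurableSpace E]

theorem measure_setOf_trigPoly_eq_zero [BorelSpace E] [SecondCountableTopology E] (μ : Measure E)
    [μ.IsAddRightInvariant] [SFinite μ] {ξ : ι → ℂ} {p : ι → E} (hp : Function.Injective p)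
    (hξ : ξ ≠ 0) : μ {x | trigPoly ξ p x = 0} = 0 := by
  obtain ⟨v, hv⟩ := exists_injective_inner hp
  refine measure_eq_zero_of_forall_line_null μ
    (measurableSet_eq_fun (continuous_trigPoly ξ p).measurable measurable_const) v fun x => ?_
  have hc : (fun j => ξ j * exp (I * ⟪p j, x⟫)) ≠ 0 := fun h0 =>
    hξ (funext fun j => by simpa using congrFun h0 j)
  simpa [ae_iff, trigPoly_add_smul] using
    (analyticOnNhd_trigPoly _ _).ae_ne_zero (μ := volume) (exists_trigPoly_ne_zero hv hc)

theorem integrable_exp_neg_I_inner [OpensMeasurableSpace E] (μ : Measure E) [IsFiniteMeasure μ]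
    (q : E) : Integrable (fun x => exp (-(I * ⟪q, x⟫))) μ :=
  (integrable_const (1 : ℝ)).mono' (by fun_prop)
    (ae_of_all _ fun x => by simp [Complex.norm_exp])

theorem integral_normSq_trigPoly [OpensMeasurableSpace E] (μ : Measure E) [IsFiniteMeasure μ]
    (ξ : ι → ℂ) (p : ι → E) :
    ((∫ x, normSq (trigPoly ξ p x) ∂μ : ℝ) : ℂ) =
      ∑ j, ∑ k, conj (ξ j) * ξ k * ∫ x, exp (-(I * ⟪p j - p k, x⟫)) ∂μ := by
  have hint (j k : ι) : Integrable (fun x => conj (ξ j) * ξ k * exp (-(I * ⟪p j - p k, x⟫))) μ :=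
    (integrable_exp_neg_I_inner μ _).const_mul _
  rw [← integral_complex_ofReal]
  simp_rw [normSq_eq_conj_mul_self, conj_trigPoly_mul_self]
  rw [integral_finsetSum _ fun j _ => integrable_finsetSum _ fun k _ => hint j k]
  refine Finset.sum_congr rfl fun j _ => ?_
  rw [integral_finsetSum _ fun k _ => hint j k]
  simp_rw [integral_const_mul]

theorem integrable_normSq_trigPoly [OpensMeasurableSpace E] (μ : Measure E) [IsFiniteMeasure μ]
    (ξ : ι → ℂ) (p : ι → E) : Integrable (fun x => normSq (trigPoly ξ p x)) μ := by
  refine (integrable_const ((∑ j, ‖ξ j‖) ^ 2)).mono'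
    (continuous_normSq.comp (continuous_trigPoly ξ p)).aestronglyMeasurable
    (ae_of_all _ fun x => ?_)
  rw [Real.norm_of_nonneg (normSq_nonneg _), normSq_eq_norm_sq]
  exact pow_le_pow_left₀ (norm_nonneg _) (norm_trigPoly_le ξ p x) 2

theorem integral_normSq_trigPoly_pos [BorelSpace E] [SecondCountableTopology E] (ν : Measure E)
    [ν.IsAddRightInvariant] [SFinite ν] (μ : Measure E) [IsFiniteMeasure μ] {ξ : ι → ℂ}
    {p : ι → E} (hp : Function.Injective p) (hξ : ξ ≠ 0) (hsupp : 0 < ν μ.support) :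
    0 < ∫ x, normSq (trigPoly ξ p x) ∂μ := by
  refine (integral_nonneg fun x => normSq_nonneg _).lt_of_ne' fun h0 => hsupp.ne' ?_
  have hae : ∀ᵐ x ∂μ, normSq (trigPoly ξ p x) = 0 :=
    (integral_eq_zero_iff_of_nonneg (fun _ => normSq_nonneg _)
      (integrable_normSq_trigPoly μ ξ p)).mp h0
  have hsub : μ.support ⊆ {x | trigPoly ξ p x = 0} :=
    Measure.support_subset_of_isClosed (isClosed_eq (continuous_trigPoly ξ p) continuous_const)
      (by filter_upwards [hae] with x hx using normSq_eq_zero.mp hx)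
  exact measure_mono_null hsub (measure_setOf_trigPoly_eq_zero ν hp hξ)

end TrigPoly

theorem fourier_matrix_neg_def_of_support_pos_measure_general
    (μ : Measure (EuclideanSpace ℝ (Fin 2))) [IsFiniteMeasure μ]
    (hsupp : 0 < volume {x : EuclideanSpace ℝ (Fin 2) | ∀ U ∈ nhds x, μ U ≠ 0})
    (hatν : EuclideanSpace ℝ (Fin 2) → ℂ)
    (hhat : ∀ p, hatν p =
      -((1 / (2 * π)) * ∫ x, Complex.exp (-(Complex.I * (⟪p, x⟫ : ℝ))) ∂μ))
    (N : ℕ) (p : Fin N → EuclideanSpace ℝ (Fin 2))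
    (hp : Function.Injective p)
    (ξ : Fin N → ℂ) (hξ : ξ ≠ 0) :
    ∃ r : ℝ, r < 0 ∧
      (∑ j, ∑ k, (starRingEnd ℂ) (ξ j) * ξ k * hatν (p j - p k)) = (r : ℂ) := by
  have hμsupp : 0 < volume μ.support := by
    convert hsupp using 2
    ext x
    simp [Measure.mem_support_iff_forall, pos_iff_ne_zero]
  set S := ∫ x, normSq (trigPoly ξ p x) ∂μ
  have hS : 0 < S := integral_normSq_trigPoly_pos volume μ hp hξ hμsupp
  refine ⟨-(S / (2 * π)), neg_neg_of_pos (by positivity), ?_⟩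
  calc ∑ j, ∑ k, conj (ξ j) * ξ k * hatν (p j - p k)
      = -(1 / (2 * π)) * ∑ j, ∑ k, conj (ξ j) * ξ k * ∫ x, exp (-(I * ⟪p j - p k, x⟫)) ∂μ := by
        simp only [hhat, Finset.mul_sum]
        congr! 2
        ring
    _ = ((-(S / (2 * π)) : ℝ) : ℂ) := by
        rw [← integral_normSq_trigPoly]
        push_cast
        ring

/-- If `ν = -μ` is a nonzero finite negative Borel measure on `ℝ²` whose topological support
has positive Lebesgue measure, then for pairwise distinct points `p₁,…,p_N`, the matrix
`(ν̂(p_j - p_k))` is negative definite. -/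
theorem fourier_matrix_neg_def_of_support_pos_measure
    (μ : Measure (EuclideanSpace ℝ (Fin 2))) [IsFiniteMeasure μ] (hμ : μ ≠ 0)
    (hsupp : 0 < volume {x : EuclideanSpace ℝ (Fin 2) | ∀ U ∈ nhds x, μ U ≠ 0})
    (hatν : EuclideanSpace ℝ (Fin 2) → ℂ)
    (hhat : ∀ p, hatν p =
      -((1 / (2 * π)) * ∫ x, Complex.exp (-(Complex.I * (⟪p, x⟫ : ℝ))) ∂μ))
    (N : ℕ) (p : Fin N → EuclideanSpace ℝ (Fin 2))
    (hp : Function.Injective p)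
    (ξ : Fin N → ℂ) (hξ : ξ ≠ 0) :
    ∃ r : ℝ, r < 0 ∧
      (∑ j, ∑ k, (starRingEnd ℂ) (ξ j) * ξ k * hatν (p j - p k)) = (r : ℂ) :=
  fourier_matrix_neg_def_of_support_pos_measure_general μ hsupp hatν hhat N p hp ξ hξ
end

section
/- Let ν be a compactly supported finite negative Borel measure on ℝ² (ν ≤ 0, ν ≠ 0) such that ν̂(p) → 0 as p → ∞ along some line through the origin, and let S ⊂ ℝ² be a set whose difference set has nonempty interior. Then for every N there exist points p₁,…,p_N ∈ S such that the matrix (ν̂(p_j - p_k))_{j,k=1}^N is negative definite. -/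
/-!
Realise the characters `x ↦ exp (i⟪x, t⟫)` as vectors `charL2 μ t` of `L²(μ)`. Their Gram
matrix is `(charFun μ (p_k - p_j))`, which is `-2π` times the matrix of the theorem, so it
suffices to find `p₁, …, p_N ∈ S` with linearly independent characters. If there were no such
points, the characters indexed by `S` would span a finite-dimensional space; since
`χ_{q - q'} = χ_q · conj χ_{q'}`, so would those indexed by `S - S`, say a space `W`. For compactly
supported `μ`, `t ↦ ⟪f, charL2 μ t⟫` is real-analytic on every line, and it vanishes on the open
set `interior (S - S)` whenever `f ⊥ W`; hence every character lies in `W`. But the decay of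
`charFun μ` along a line makes the Gram matrix of widely spaced points on it strictly diagonally
dominant, giving arbitrarily many independent characters.
-/

open MeasureTheory Real Filter Complex Topology
open BoundedContinuousFunction (innerProbChar innerProbChar_apply)
open scoped Pointwise InnerProductSpace RealInnerProductSpace ComplexOrder ComplexConjugate
  BoundedContinuousFunction

open Submodule in
theorem exists_finite_subset_span_image_eq {R M α : Type*} [Semiring R] [AddCommMonoid M]
    [Module R M] {f : α → M} {s : Set α} (h : (span R (f '' s)).FG) :
    ∃ t ⊆ s, t.Finite ∧ span R (f '' t) = span R (f '' s) := by
  obtain ⟨t, hts, heq⟩ := (fg_span_iff_fg_span_finset_subset _).mp h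
  exact Set.exists_subset_image_finite_and (p := fun u => span R u = span R (f '' s)) |>.mp
    ⟨t, hts, t.finite_toSet, heq.symm⟩

open Submodule in
theorem exists_linearIndependent_comp_of_not_fg {K V α : Type*} [DivisionRing K]
    [AddCommGroup V] [Module K V] {f : α → V} {s : Set α} (h : ¬ (span K (f '' s)).FG)
    (n : ℕ) : ∃ p : Fin n → α, (∀ i, p i ∈ s) ∧ LinearIndependent K (f ∘ p) := by
  obtain ⟨κ, a, -, hspan, hli⟩ := exists_linearIndependent' K fun i : s => f i
  have : Infinite κ := by
    refine not_finite_iff_infinite.mp fun _ => h ?_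
    rw [Set.image_eq_range, ← hspan]
    exact fg_span (Set.finite_range _)
  let e : Fin n ↪ κ := Fin.valEmbedding.trans (Infinite.natEmbedding κ)
  exact ⟨fun i => a (e i), fun i => (a (e i)).2, hli.comp e e.injective⟩

lemma one_le_abs_natCast_sub_natCast {m n : ℕ} (h : m ≠ n) : 1 ≤ |(m : ℝ) - n| := by
  have : (1 : ℤ) ≤ |(m : ℤ) - n| := Int.one_le_abs (sub_ne_zero.mpr (by exact_mod_cast h))
  exact_mod_cast this

theorem differentiable_integral_mul_cexp {α : Type*} [MeasurableSpace α] {μ : Measure α}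
    {G : α → ℂ} (hG : Integrable G μ) {h : α → ℝ} (hh : AEStronglyMeasurable h μ) {C : ℝ}
    (hC : ∀ᵐ x ∂μ, |h x| ≤ C) :
    Differentiable ℂ fun z : ℂ => ∫ x, G x * cexp (z * h x) ∂μ := by
  have hmeas : ∀ z : ℂ, AEStronglyMeasurable (fun x => cexp (z * h x)) μ := fun z =>
    continuous_exp.comp_aestronglyMeasurable
      (aestronglyMeasurable_const.mul (continuous_ofReal.comp_aestronglyMeasurable hh))
  have hbound : ∀ᵐ x ∂μ, ∀ z : ℂ, ‖cexp (z * h x)‖ ≤ Real.exp (‖z‖ * C) := by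
    filter_upwards [hC] with x hx z
    rw [norm_exp]
    gcongr
    calc (z * h x).re ≤ ‖z * h x‖ := re_le_norm _
      _ = ‖z‖ * |h x| := by rw [norm_mul, norm_real, Real.norm_eq_abs]
      _ ≤ ‖z‖ * C := by gcongr
  intro z₀
  refine (hasDerivAt_integral_of_dominated_loc_of_deriv_le
    (F' := fun z x => G x * cexp (z * h x) * h x)
    (bound := fun x => ‖G x‖ * Real.exp ((‖z₀‖ + 1) * C) * C)
    (Metric.ball_mem_nhds z₀ one_pos) (.of_forall fun z => hG.1.mul (hmeas z))
    (hG.mul_bdd (hmeas z₀) (hbound.mono fun x hx => hx z₀)) ?_ ?_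
    ((hG.norm.mul_const _).mul_const _) ?_).2.differentiableAt
  · exact (hG.1.mul (hmeas z₀)).mul (continuous_ofReal.comp_aestronglyMeasurable hh)
  · filter_upwards [hC, hbound] with x hx hxb z hz
    have hz' : ‖z‖ ≤ ‖z₀‖ + 1 := by
      have := norm_le_norm_add_norm_sub' z z₀
      rw [Metric.mem_ball, dist_eq_norm] at hz
      linarith
    have hC0 : 0 ≤ C := (abs_nonneg _).trans hx
    rw [norm_mul, norm_mul, norm_real, Real.norm_eq_abs]
    gcongr
    exact (hxb z).trans (Real.exp_le_exp.mpr (by gcongr))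
  · exact .of_forall fun x z _ =>
      (((hasDerivAt_id z).mul_const (h x : ℂ)).cexp.const_mul (G x)).congr_deriv (by simp; ring)

section

variable {E : Type*} [NormedAddCommGroup E] [InnerProductSpace ℝ E]

lemma innerProbChar_sub (s t : E) :
    innerProbChar (s - t) = innerProbChar s * star (innerProbChar t) := by
  ext x
  simp only [BoundedContinuousFunction.coe_mul, BoundedContinuousFunction.coe_star, Pi.mul_apply,
    Pi.star_apply, innerProbChar_apply, RCLike.star_def, ← exp_conj, ← Complex.exp_add,
    inner_sub_right]
  congr 1
  simp [Complex.conj_ofReal]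
  ring

variable [MeasurableSpace E] [BorelSpace E] (μ : Measure E) [IsFiniteMeasure μ]

noncomputable def charL2 (t : E) : Lp ℂ 2 μ :=
  BoundedContinuousFunction.toLp 2 μ ℂ (innerProbChar t)

lemma coeFn_charL2 (t : E) : charL2 μ t =ᵐ[μ] fun x => cexp (⟪x, t⟫ * I) :=
  BoundedContinuousFunction.coeFn_toLp 2 μ ℂ (innerProbChar t)

lemma inner_charL2 (s t : E) : ⟪charL2 μ s, charL2 μ t⟫_ℂ = charFun μ (t - s) := by
  rw [charL2, charL2, BoundedContinuousFunction.inner_toLp, charFun_apply]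
  simp_rw [← innerProbChar_apply, innerProbChar_sub]
  rfl

lemma inner_charL2_add_smul (f : Lp ℂ 2 μ) (a b : E) (r : ℝ) :
    ⟪f, charL2 μ (a + r • b)⟫_ℂ = ∫ x, ⟪f x, charL2 μ a x⟫_ℂ * cexp ((r * I) * ⟪x, b⟫) ∂μ := by
  rw [L2.inner_def]
  refine integral_congr_ae ?_
  filter_upwards [coeFn_charL2 μ (a + r • b), coeFn_charL2 μ a] with x h h'
  rw [h, h', RCLike.inner_apply, RCLike.inner_apply, inner_add_right, inner_smul_right]
  push_cast
  rw [show ((⟪x, a⟫ : ℂ) + r * ⟪x, b⟫) * I = ⟪x, a⟫ * I + r * I * ⟪x, b⟫ by ring,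
    Complex.exp_add]
  ring

lemma analyticAt_inner_charL2_add_smul {K : Set E} (hK : IsCompact K) (hμK : μ Kᶜ = 0)
    (f : Lp ℂ 2 μ) (a b : E) (r₀ : ℝ) :
    AnalyticAt ℝ (fun r : ℝ => ⟪f, charL2 μ (a + r • b)⟫_ℂ) r₀ := by
  obtain ⟨R, hR⟩ := hK.isBounded.exists_norm_le
  have hC : ∀ᵐ x ∂μ, |⟪x, b⟫| ≤ R * ‖b‖ := by
    filter_upwards [measure_eq_zero_iff_ae_notMem.mp hμK] with x hx
    exact (abs_real_inner_le_norm x b).trans (by gcongr; exact hR x (by simpa using hx))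
  have hentire := differentiable_integral_mul_cexp (L2.integrable_inner f (charL2 μ a))
    (continuous_id.inner continuous_const).aestronglyMeasurable hC
  simp_rw [inner_charL2_add_smul]
  exact (hentire.analyticAt _).restrictScalars.comp
    ((ofRealCLM.analyticAt r₀).mul analyticAt_const)

variable {μ} in
lemma charL2_mem_of_forall_mem_isOpen {K : Set E} (hK : IsCompact K) (hμK : μ Kᶜ = 0)
    (W : Submodule ℂ (Lp ℂ 2 μ)) [W.HasOrthogonalProjection] {U : Set E} (hU : IsOpen U)
    (hU₀ : U.Nonempty) (hUW : ∀ w ∈ U, charL2 μ w ∈ W) (w : E) : charL2 μ w ∈ W := by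
  rw [← W.orthogonal_orthogonal]
  intro f hf
  obtain ⟨w₀, hw₀⟩ := hU₀
  have hline : ∀ᶠ r in 𝓝 (0 : ℝ), ⟪f, charL2 μ (w₀ + r • (w - w₀))⟫_ℂ = 0 := by
    have hcont : Continuous fun r : ℝ => w₀ + r • (w - w₀) := by fun_prop
    filter_upwards [hcont.continuousAt.preimage_mem_nhds (hU.mem_nhds (by simpa using hw₀))]
      with r hr using Submodule.inner_left_of_mem_orthogonal (hUW _ hr) hf
  have hanalytic : AnalyticOnNhd ℝ (fun r : ℝ => ⟪f, charL2 μ (w₀ + r • (w - w₀))⟫_ℂ) Set.univ :=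
    fun r _ => analyticAt_inner_charL2_add_smul μ hK hμK f w₀ (w - w₀) r
  simpa using hanalytic.eqOn_zero_of_preconnected_of_eventuallyEq_zero isPreconnected_univ
    (Set.mem_univ 0) hline (Set.mem_univ 1)

lemma ae_eq_sum_innerProbChar_of_charL2_eq_sum {s : Finset E} {c : s → ℂ} {q : E}
    (hq : ∑ i, c i • charL2 μ i = charL2 μ q) :
    ⇑(innerProbChar q) =ᵐ[μ] ⇑(∑ i, c i • innerProbChar (i : E)) := by
  have hLp : charL2 μ q =
      BoundedContinuousFunction.toLp 2 μ ℂ (∑ i, c i • innerProbChar (i : E)) := by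
    rw [← hq]
    simp only [map_sum, map_smul, charL2]
  refine (coeFn_charL2 μ q).symm.trans ?_
  rw [hLp]
  exact BoundedContinuousFunction.coeFn_toLp 2 μ ℂ _

open Submodule in
lemma charL2_sub_mem_span {T : Set E} {q q' : E} (hq : charL2 μ q ∈ span ℂ (charL2 μ '' T))
    (hq' : charL2 μ q' ∈ span ℂ (charL2 μ '' T)) :
    charL2 μ (q - q') ∈ span ℂ (charL2 μ '' (T - T)) := by
  obtain ⟨t, htT, c, hc⟩ := (mem_span_image_iff_exists_fun ℂ).mp hq
  obtain ⟨t', htT', c', hc'⟩ := (mem_span_image_iff_exists_fun ℂ).mp hq'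
  set F : E →ᵇ ℂ := ∑ i, c i • innerProbChar (i : E)
  set G : E →ᵇ ℂ := ∑ j, c' j • innerProbChar (j : E)
  have hFG : F * star G = ∑ i, ∑ j, (c i * conj (c' j)) • innerProbChar (i - j : E) := by
    simp only [F, G, star_sum, star_smul, Finset.sum_mul_sum, smul_mul_smul, innerProbChar_sub]
    rfl
  have hexpand : charL2 μ (q - q') = ∑ i, ∑ j, (c i * conj (c' j)) • charL2 μ (i - j) := by
    calc charL2 μ (q - q') = BoundedContinuousFunction.toLp 2 μ ℂ (F * star G) := by
          refine Lp.ext ?_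
          filter_upwards [coeFn_charL2 μ (q - q'),
            BoundedContinuousFunction.coeFn_toLp (E := ℂ) 2 μ ℂ (F * star G),
            ae_eq_sum_innerProbChar_of_charL2_eq_sum μ hc,
            ae_eq_sum_innerProbChar_of_charL2_eq_sum μ hc'] with x h₁ h₂ h₃ h₄
          rw [h₁, h₂, ← innerProbChar_apply, innerProbChar_sub]
          simp [h₃, h₄, F, G]
      _ = _ := by simp only [hFG, map_sum, map_smul, charL2]
  rw [hexpand]
  exact sum_mem fun i _ => sum_mem fun j _ => smul_mem _ _ <| subset_span <|
    Set.mem_image_of_mem _ (Set.sub_mem_sub (htT i.2) (htT' j.2))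

variable {μ} in
lemma exists_linearIndependent_charL2_smul [NeZero μ] {v : E}
    (hv : Tendsto (fun r : ℝ => charFun μ (r • v)) (cocompact ℝ) (𝓝 0)) (n : ℕ) :
    ∃ r : Fin n → ℝ, LinearIndependent ℂ fun k => charL2 μ (r k • v) := by
  have ht₀ : 0 < μ.real Set.univ := measureReal_univ_pos
  set ε := μ.real Set.univ / (n + 1)
  have hsmall : ∀ᶠ r in Bornology.cobounded ℝ, ‖charFun μ (r • v)‖ < ε :=
    Metric.cobounded_eq_cocompact (α := ℝ) ▸
      (tendsto_zero_iff_norm_tendsto_zero.mp hv).eventually (gt_mem_nhds (by positivity))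
  obtain ⟨R, -, hR⟩ := hasBasis_cobounded_norm.eventually_iff.mp hsmall
  refine ⟨fun k => k * |R|, Matrix.linearIndependent_of_det_gram_ne_zero <|
    det_ne_zero_of_sum_row_lt_diag fun k => ?_⟩
  simp only [Matrix.gram_apply, inner_charL2, ← sub_smul, sub_self, charFun_zero,
    Complex.norm_real, Real.norm_eq_abs, abs_of_pos ht₀]
  calc ∑ l ∈ Finset.univ.erase k, ‖charFun μ ((l * |R| - k * |R|) • v)‖
      ≤ ∑ l ∈ Finset.univ.erase k, ε := by
        refine Finset.sum_le_sum fun l hl => (hR (show R ≤ ‖_‖ from ?_)).le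
        rw [← sub_mul, Real.norm_eq_abs, abs_mul, abs_abs]
        exact (le_abs_self R).trans (le_mul_of_one_le_left (abs_nonneg R)
          (one_le_abs_natCast_sub_natCast (Fin.val_ne_of_ne (Finset.ne_of_mem_erase hl))))
    _ = (n - 1) * ε := by
        rw [Finset.sum_const, Finset.card_erase_of_mem (Finset.mem_univ k), Finset.card_univ,
          Fintype.card_fin, nsmul_eq_mul, Nat.cast_sub (Nat.one_le_iff_ne_zero.mpr k.pos.ne')]
        simp
    _ < μ.real Set.univ := by
        rw [mul_div_assoc', div_lt_iff₀ (by positivity)]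
        nlinarith

variable {μ} in
open Submodule in
theorem exists_linearIndependent_charL2 [NeZero μ] {K : Set E} (hK : IsCompact K)
    (hμK : μ Kᶜ = 0) {v : E} (hv : Tendsto (fun r : ℝ => charFun μ (r • v)) (cocompact ℝ) (𝓝 0))
    {S : Set E} (hS : (interior (S - S)).Nonempty) (N : ℕ) :
    ∃ p : Fin N → E, (∀ j, p j ∈ S) ∧ LinearIndependent ℂ (charL2 μ ∘ p) := by
  refine exists_linearIndependent_comp_of_not_fg (fun hfg => ?_) N
  obtain ⟨T, hTS, hT, hspan⟩ := exists_finite_subset_span_image_eq hfg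
  set W := span ℂ (charL2 μ '' (T - T))
  have : FiniteDimensional ℂ W := FiniteDimensional.span_of_finite ℂ ((hT.sub hT).image _)
  have hmemT : ∀ q ∈ S, charL2 μ q ∈ span ℂ (charL2 μ '' T) := fun q hq =>
    hspan ▸ subset_span (Set.mem_image_of_mem _ hq)
  have hSS : ∀ w ∈ S - S, charL2 μ w ∈ W := by
    rintro _ ⟨q, hq, q', hq', rfl⟩
    exact charL2_sub_mem_span μ (hmemT q hq) (hmemT q' hq')
  have hall : ∀ w, charL2 μ w ∈ W := charL2_mem_of_forall_mem_isOpen hK hμK W isOpen_interior hS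
    fun w hw => hSS w (interior_subset hw)
  obtain ⟨r, hr⟩ := exists_linearIndependent_charL2_smul hv (Module.finrank ℂ W + 1)
  have := finrank_span_eq_card hr ▸
    Submodule.finrank_mono (span_le.mpr (Set.range_subset_iff.mpr fun k => hall (r k • v)))
  simp at this

end

/-- If `ν` is a nonzero compactly supported finite negative measure on `ℝ²` whose Fourier
transform decays along some line through the origin, and `S` has a difference set with
nonempty interior, then for every `N` there are points `p₁,…,p_N ∈ S` making the matrix
`(ν̂(p_j - p_k))` negative definite. -/
theorem exists_points_neg_def_matrix
    (μ : Measure (EuclideanSpace ℝ (Fin 2))) [IsFiniteMeasure μ] (hμ : μ ≠ 0)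
    (K : Set (EuclideanSpace ℝ (Fin 2))) (hK : IsCompact K) (hμK : μ Kᶜ = 0)
    (hatν : EuclideanSpace ℝ (Fin 2) → ℂ)
    (hhat : ∀ p, hatν p =
      -((1 / (2 * π)) * ∫ x, Complex.exp (-(Complex.I * (⟪p, x⟫ : ℝ))) ∂μ))
    (hdecay : ∃ v : EuclideanSpace ℝ (Fin 2), v ≠ 0 ∧
      Tendsto (fun r : ℝ => hatν (r • v)) (cocompact ℝ) (nhds 0))
    (S : Set (EuclideanSpace ℝ (Fin 2)))
    (hS : (interior {q : EuclideanSpace ℝ (Fin 2) | ∃ p ∈ S, ∃ p' ∈ S, q = p - p'}).Nonempty) :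
    ∀ N : ℕ, ∃ p : Fin N → EuclideanSpace ℝ (Fin 2), (∀ j, p j ∈ S) ∧
      (-(Matrix.of fun j k => hatν (p j - p k))).PosDef := by
  intro N
  have : NeZero μ := ⟨hμ⟩
  have hhat' : ∀ p, hatν p = -((2 * π)⁻¹ : ℝ) * charFun μ (-p) := fun p => by
    rw [hhat, charFun_apply]
    simp_rw [inner_neg_right, real_inner_comm p]
    push_cast
    ring_nf
  obtain ⟨v, -, hv⟩ := hdecay
  have hv' : Tendsto (fun r : ℝ => charFun μ (r • -v)) (cocompact ℝ) (𝓝 0) := by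
    convert hv.const_mul (-(2 * π) : ℂ) using 2 with r
    · rw [hhat', smul_neg]
      push_cast
      field_simp
    · simp
  have hS' : (interior (S - S)).Nonempty := by
    convert hS using 3
    ext q
    simp [Set.mem_sub, eq_comm]
  obtain ⟨p, hpS, hp⟩ := exists_linearIndependent_charL2 hK hμK hv' hS' N
  refine ⟨p, hpS, ?_⟩
  have hmat : -(Matrix.of fun j k => hatν (p j - p k)) =
      ((2 * π)⁻¹ : ℝ) • Matrix.gram ℂ (charL2 μ ∘ p) := by
    ext j k
    simp [hhat', inner_charL2]
  rw [hmat]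
  exact (Matrix.posDef_gram_of_linearIndependent hp).smul (by positivity)
end
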